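/- arXiv:1310.3030 — 2 statements merged into one kernel-verified Lean document; each statement's English description precedes it below -/
import Mathlib

section
/- For a rack X and fixed x ∈ X, with h_x : C_n^R(X) → C_{n+1}^R(X) given by h_x(x_1,...,x_n) = (x_1,...,x_n,x), the maps (-1)^{n+1} h_x form a chain homotopy between the identity and the chain map *_x: ∂_{n+1}((-1)^{n+1} h_x) + (-1)^n h_x ∂_n = Id - *_x. Consequently *_x induces the identity on rack homology. -/
/-- The face map `d_i^{(*_0)}` (1-based index `i = p+1`): delete the `p`-th entry. -/
def faceZero {X : Type*} {n : ℕ} (p : Fin (n + 1)) (x : Fin (n + 1) → X) : Fin n → X :=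
  fun j => x (p.succAbove j)

/-- The face map `d_i^{(*)}` (1-based index `i = p+1`): delete the `p`-th entry and
act by `x_p` on all earlier entries. -/
def faceStar {X : Type*} (star : X → X → X) {n : ℕ} (p : Fin (n + 1))
    (x : Fin (n + 1) → X) : Fin n → X :=
  fun j => if (p.succAbove j : ℕ) < (p : ℕ) then star (x (p.succAbove j)) (x p)
           else x (p.succAbove j)

/-- The rack boundary `∂(x_1,…,x_n) = Σ_{i=2}^n (-1)^i (d_i^{(*_0)} - d_i^{(*)})`,
on `C_{n+1}^R(X) = ℤ X^{n+1}`. -/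
noncomputable def rackBoundary {X : Type*} (star : X → X → X) (n : ℕ) :
    ((Fin (n + 1) → X) →₀ ℤ) →ₗ[ℤ] ((Fin n → X) →₀ ℤ) :=
  ∑ j : Fin n, ((-1 : ℤ) ^ ((j : ℕ) + 2)) •
    (Finsupp.lmapDomain ℤ ℤ (faceZero j.succ) - Finsupp.lmapDomain ℤ ℤ (faceStar star j.succ))

/-- The coordinatewise right-translation map `*_x` on `ℤX^m`. -/
noncomputable def mulMap {X : Type*} (star : X → X → X) (m : ℕ) (x : X) :
    ((Fin m → X) →₀ ℤ) →ₗ[ℤ] ((Fin m → X) →₀ ℤ) :=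
  Finsupp.lmapDomain ℤ ℤ (fun t : Fin m → X => fun j => star (t j) x)

/-- The homotopy `h_x(x_1,…,x_m) = (x_1,…,x_m,x)` on `ℤX^m`. -/
noncomputable def hMap {X : Type*} (m : ℕ) (x : X) :
    ((Fin m → X) →₀ ℤ) →ₗ[ℤ] ((Fin (m + 1) → X) →₀ ℤ) :=
  Finsupp.lmapDomain ℤ ℤ (fun t : Fin m → X => Fin.snoc t x)

/-! Appending `x` commutes with every face map except the last one, which returns the input
(for `d^{(*_0)}`) or its translate by `x` (for `d^{(*)}`). In the boundary of `h_x t` the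
first `n + 1` terms therefore add up to `h_x (∂ t)` and the last term is `±(t - t *_x)`;
since the two summands of the homotopy carry opposite signs, only `t - t *_x` survives. -/

section FaceSnoc

variable {X : Type*} {n : ℕ}

lemma faceZero_castSucc_snoc (p : Fin (n + 1)) (t : Fin (n + 1) → X) (x : X) :
    faceZero p.castSucc (Fin.snoc t x) = Fin.snoc (faceZero p t) x := by
  funext i
  refine Fin.lastCases ?_ (fun i => ?_) i
  · simp [faceZero]
  · simp [faceZero, Fin.castSucc_succAbove_castSucc]

lemma faceStar_castSucc_snoc (star : X → X → X) (p : Fin (n + 1)) (t : Fin (n + 1) → X)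
    (x : X) : faceStar star p.castSucc (Fin.snoc t x) = Fin.snoc (faceStar star p t) x := by
  funext i
  refine Fin.lastCases ?_ (fun i => ?_) i
  · simp [faceStar]
  · simp [faceStar, Fin.castSucc_succAbove_castSucc]

lemma faceZero_last_snoc (t : Fin (n + 1) → X) (x : X) :
    faceZero (Fin.last (n + 1)) (Fin.snoc t x) = t := by
  funext i
  simp [faceZero]

lemma faceStar_last_snoc (star : X → X → X) (t : Fin (n + 1) → X) (x : X) :
    faceStar star (Fin.last (n + 1)) (Fin.snoc t x) = fun i => star (t i) x := by
  funext i
  simp [faceStar, i.is_lt]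

end FaceSnoc

section Singles

variable {X : Type*} (star : X → X → X) (b : ℤ)

lemma rackBoundary_single (n : ℕ) (t : Fin (n + 1) → X) :
    rackBoundary star n (Finsupp.single t b) =
      ∑ j : Fin n, (-1 : ℤ) ^ ((j : ℕ) + 2) •
        (Finsupp.single (faceZero j.succ t) b - Finsupp.single (faceStar star j.succ t) b) := by
  simp [rackBoundary]

lemma hMap_single (m : ℕ) (x : X) (t : Fin m → X) :
    hMap m x (Finsupp.single t b) = Finsupp.single (Fin.snoc t x) b := by
  simp [hMap]

lemma mulMap_single (m : ℕ) (x : X) (t : Fin m → X) :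
    mulMap star m x (Finsupp.single t b) = Finsupp.single (fun j => star (t j) x) b := by
  simp [mulMap]

end Singles

lemma rackBoundary_comp_hMap {X : Type*} (star : X → X → X) (x : X) (n : ℕ) :
    (rackBoundary star (n + 1)).comp (hMap (n + 1) x) =
      (hMap n x).comp (rackBoundary star n) +
        (-1 : ℤ) ^ (n + 2) • (LinearMap.id - mulMap star (n + 1) x) := by
  refine Finsupp.lhom_ext fun t b => ?_
  simp only [LinearMap.add_apply, LinearMap.smul_apply, LinearMap.comp_apply,
    LinearMap.sub_apply, LinearMap.id_apply, hMap_single, rackBoundary_single, mulMap_single,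
    Fin.sum_univ_castSucc, map_sum, map_smul, map_sub, Fin.succ_castSucc, Fin.succ_last,
    Fin.val_castSucc, Fin.val_last, faceZero_castSucc_snoc, faceStar_castSucc_snoc,
    faceZero_last_snoc, faceStar_last_snoc]

theorem stmt14_general {X : Type*} (star : X → X → X) (x : X) (n : ℕ) :
    ((-1 : ℤ) ^ (n + 2)) • ((rackBoundary star (n + 1)).comp (hMap (n + 1) x)) +
      ((-1 : ℤ) ^ (n + 1)) • ((hMap n x).comp (rackBoundary star n)) =
    LinearMap.id - mulMap star (n + 1) x := by
  have hsign : (-1 : ℤ) ^ (n + 1) = -(-1) ^ (n + 2) := by ring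
  have hsq : (-1 : ℤ) ^ (n + 2) * (-1) ^ (n + 2) = 1 := by
    rw [← pow_add]
    exact Even.neg_one_pow ⟨n + 2, rfl⟩
  rw [rackBoundary_comp_hMap, hsign, smul_add, smul_smul, hsq, one_smul, neg_smul]
  abel

/-- For a rack `X` and fixed `x`, the maps `(-1)^{m+1} h_x` form a chain homotopy
between the identity and `*_x`: on `C_{n+1}^R(X)`,
`∂((-1)^{n+2} h_x) + (-1)^{n+1} h_x ∂ = Id - *_x`. -/
theorem stmt14 {X : Type*} (star : X → X → X)
    (hsd : ∀ a b c : X, star (star a b) c = star (star a c) (star b c))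
    (hinv : ∀ b : X, Function.Bijective (fun a => star a b)) (x : X) (n : ℕ) :
    ((-1 : ℤ) ^ (n + 2)) • ((rackBoundary star (n + 1)).comp (hMap (n + 1) x)) +
      ((-1 : ℤ) ^ (n + 1)) • ((hMap n x).comp (rackBoundary star n)) =
    LinearMap.id - mulMap star (n + 1) x :=
  stmt14_general star x n
end

section
/- Let (X;*) be a shelf and E a right X-shelf-set (so (e*x_1)*x_2 = (e*x_2)*(x_1*x_2)). Define on the disjoint union X ⊔ E an operation extending * on X and the action of X on E, with a * y = a for all a ∈ X ⊔ E and y ∈ E. Then X ⊔ E is a shelf. Moreover, if X is a rack and E an X-rack-set (the action maps e ↦ e*b are bijective), then X ⊔ E is a rack; if X is a quandle, X ⊔ E is a quandle. -/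
/-- The operation on the disjoint union `X ⊔ E` extending `*` on `X` and the
action of `X` on `E`, with `a * y = a` whenever `y ∈ E`. -/
def sumOp {X E : Type*} (star : X → X → X) (act : E → X → E) :
    X ⊕ E → X ⊕ E → X ⊕ E
  | Sum.inl a, Sum.inl b => Sum.inl (star a b)
  | Sum.inl a, Sum.inr _ => Sum.inl a
  | Sum.inr e, Sum.inl b => Sum.inr (act e b)
  | Sum.inr e, Sum.inr _ => Sum.inr e

section

variable {X E : Type*} (star : X → X → X) (act : E → X → E)

theorem sumOp_inl_right_eq_sumMap (b : X) :
    (fun a => sumOp star act a (Sum.inl b)) = Sum.map (fun a => star a b) (fun e => act e b) := by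
  funext a
  cases a <;> rfl

theorem sumOp_inr_right_eq_id (y : E) : (fun a => sumOp star act a (Sum.inr y)) = id := by
  funext a
  cases a <;> rfl

theorem sumOp_right_distrib
    (hX : ∀ a b c : X, star (star a b) c = star (star a c) (star b c))
    (hE : ∀ (e : E) (x₁ x₂ : X), act (act e x₁) x₂ = act (act e x₂) (star x₁ x₂))
    (a b c : X ⊕ E) :
    sumOp star act (sumOp star act a b) c =
      sumOp star act (sumOp star act a c) (sumOp star act b c) := by
  rcases a with a | a <;> rcases b with b | b <;> rcases c with c | c <;> simp only [sumOp]
  · rw [hX]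
  · rw [hE]

theorem sumOp_bijective_right
    (hstar : ∀ b : X, Function.Bijective (fun a => star a b))
    (hact : ∀ b : X, Function.Bijective (fun e => act e b)) (b : X ⊕ E) :
    Function.Bijective (fun a => sumOp star act a b) := by
  rcases b with b | y
  · rw [sumOp_inl_right_eq_sumMap]
    exact (hstar b).sumMap (hact b)
  · rw [sumOp_inr_right_eq_id]
    exact Function.bijective_id

theorem sumOp_self (hidem : ∀ a : X, star a a = a) (a : X ⊕ E) : sumOp star act a a = a := by
  rcases a with a | e
  · exact congrArg Sum.inl (hidem a)
  · rfl

end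

/-- If `(X;*)` is a shelf and `E` a right `X`-shelf-set, then `X ⊔ E` is a shelf.
If moreover `X` is a rack and `E` an `X`-rack-set then `X ⊔ E` is a rack,
and if `X` is a quandle then `X ⊔ E` is a quandle. -/
theorem stmt16 {X E : Type*} (star : X → X → X) (act : E → X → E)
    (hX : ∀ a b c : X, star (star a b) c = star (star a c) (star b c))
    (hE : ∀ (e : E) (x₁ x₂ : X), act (act e x₁) x₂ = act (act e x₂) (star x₁ x₂)) :
    (∀ a b c : X ⊕ E,
      sumOp star act (sumOp star act a b) c =
        sumOp star act (sumOp star act a c) (sumOp star act b c)) ∧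
    ((∀ b : X, Function.Bijective (fun a => star a b)) →
      (∀ b : X, Function.Bijective (fun e => act e b)) →
      ∀ b : X ⊕ E, Function.Bijective (fun a => sumOp star act a b)) ∧
    ((∀ a : X, star a a = a) → ∀ a : X ⊕ E, sumOp star act a a = a) :=
  ⟨sumOp_right_distrib star act hX hE, sumOp_bijective_right star act,
    sumOp_self star act⟩
end
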